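/- Exact finite-sample expansion of the corrected estimator (exact form of Proposition 1): under the VAR(r)-with-measurement-error model stated in the context, set ϑ_t = q_t + e_t − B e*_{t−1}, so that Z_t = a + B Z*_{t−1} + ϑ_t almost surely. For k = 1,…,p let B_{.k} denote the k-th row of B written as a column vector in ℝ^{pr}, let ϑ_{k i} denote the k-th coordinate of ϑ_i, let B̂_{.k,n} = (S_{Z*,n} − I_r⊗Σ_e)^{-1} S_{Z* Z_k,n} with S_{Z* Z_k,n} = n⁻¹Σ_{i=1}^n (Z*_{i−1} − Z̄*_n) Z_{k i}, and let S_{Z* ϑ_k,n} = n⁻¹Σ_{i=1}^n (Z*_{i−1} − Z̄*_n) ϑ_{k i}. Then, on the event where S_{Z*,n} − I_r⊗Σ_e is invertible, B̂_{.k,n} − B_{.k} = (S_{Z*,n} − I_r⊗Σ_e)^{-1} [ S_{Z* ϑ_k,n} + (I_r⊗Σ_e) B_{.k} ] for every k. -/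
import Mathlib


open MeasureTheory ProbabilityTheory Matrix Filter

noncomputable section

/-- **Exact finite-sample expansion of the corrected estimator (exact form of
Proposition 1).**  Under the VAR(r) model `z_t = a + B_1 z_{t−1} + … + B_r z_{t−r} + q_t`
(a.s.) observed with additive measurement error `Z_t = z_t + e_t`, set
`ϑ_t = q_t + e_t − B e*_{t−1}`.  For `k = 1,…,p`, on the event where
`S_{Z*,n} − I_r⊗Σ_e` is invertible,
`B̂_{.k,n} − B_{.k} = (S_{Z*,n} − I_r⊗Σ_e)⁻¹ [S_{Z*ϑ_k,n} + (I_r⊗Σ_e) B_{.k}]`. -/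
theorem corrected_estimator_exact_expansion
    {p r n : ℕ} (hp : 1 ≤ p) (hr : 1 ≤ r) (hn : 1 ≤ n)
    {Ω : Type*} [MeasurableSpace Ω] (P : Measure Ω) [IsProbabilityMeasure P]
    (z q e : ℤ → Ω → Fin p → ℝ) (a : Fin p → ℝ)
    (B : Matrix (Fin p) (Fin r × Fin p) ℝ)
    (Sige : Matrix (Fin p) (Fin p) ℝ)
    -- the VAR(r) equation, a.s., for every time point
    (hvar : ∀ t : ℤ, ∀ᵐ ω ∂P,
      z t ω = a + B.mulVec (fun jk => z (t - 1 - (jk.1 : ℤ)) ω jk.2) + q t ω)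
    -- observed process and stacked vectors
    (Z : ℤ → Ω → Fin p → ℝ) (hZ : ∀ t ω, Z t ω = z t ω + e t ω)
    (Zs : ℤ → Ω → Fin r × Fin p → ℝ)
    (hZs : ∀ t ω jk, Zs t ω jk = Z (t - 1 - (jk.1 : ℤ)) ω jk.2)
    (es : ℤ → Ω → Fin r × Fin p → ℝ)
    (hes : ∀ t ω jk, es t ω jk = e (t - 1 - (jk.1 : ℤ)) ω jk.2)
    -- the composite error `ϑ_t = q_t + e_t − B e*_{t−1}`
    (ϑ : ℤ → Ω → Fin p → ℝ)
    (hϑ : ∀ t ω, ϑ t ω = q t ω + e t ω - B.mulVec (es t ω))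
    -- sample statistics
    (Zsbar : Ω → Fin r × Fin p → ℝ)
    (hZsbar : ∀ ω, Zsbar ω = (n : ℝ)⁻¹ • ∑ i ∈ Finset.range n, Zs (i + 1) ω)
    (SZs : Ω → Matrix (Fin r × Fin p) (Fin r × Fin p) ℝ)
    (hSZs : ∀ ω, SZs ω = (n : ℝ)⁻¹ •
      ∑ i ∈ Finset.range n, vecMulVec (Zs (i + 1) ω - Zsbar ω) (Zs (i + 1) ω))
    (SZsZk : Fin p → Ω → Fin r × Fin p → ℝ)
    (hSZsZk : ∀ k ω, SZsZk k ω = (n : ℝ)⁻¹ •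
      ∑ i ∈ Finset.range n, Z (i + 1) ω k • (Zs (i + 1) ω - Zsbar ω))
    (SZsϑk : Fin p → Ω → Fin r × Fin p → ℝ)
    (hSZsϑk : ∀ k ω, SZsϑk k ω = (n : ℝ)⁻¹ •
      ∑ i ∈ Finset.range n, ϑ (i + 1) ω k • (Zs (i + 1) ω - Zsbar ω)) :
    -- conclusion: a.s., on the event where `S_{Z*,n} − I_r⊗Σ_e` is invertible,
    -- the exact expansion holds for every k
    ∀ᵐ ω ∂P,
      IsUnit (SZs ω - Matrix.kroneckerMap (· * ·) (1 : Matrix (Fin r) (Fin r) ℝ) Sige).det →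
      ∀ k : Fin p,
        (SZs ω - Matrix.kroneckerMap (· * ·) (1 : Matrix (Fin r) (Fin r) ℝ) Sige)⁻¹.mulVec
            (SZsZk k ω)
          - (fun jk => B k jk)
        = (SZs ω - Matrix.kroneckerMap (· * ·) (1 : Matrix (Fin r) (Fin r) ℝ) Sige)⁻¹.mulVec
            (SZsϑk k ω
              + (Matrix.kroneckerMap (· * ·) (1 : Matrix (Fin r) (Fin r) ℝ) Sige).mulVec
                  (fun jk => B k jk)) := by

  have hvar' : ∀ᵐ ω ∂P, ∀ t : ℤ,
      z t ω = a + B.mulVec (fun jk => z (t - 1 - (jk.1 : ℤ)) ω jk.2) + q t ω :=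
    ae_all_iff.2 hvar
  filter_upwards [hvar'] with ω hω hdet k
  set K := Matrix.kroneckerMap (· * ·) (1 : Matrix (Fin r) (Fin r) ℝ) Sige with hK
  set M := SZs ω - K with hM
  set Bk : Fin r × Fin p → ℝ := fun jk => B k jk with hBk
  -- Step 1: Z_t = a + B Zs_t + ϑ_t
  have hZeq : ∀ t : ℤ, Z t ω = a + B.mulVec (Zs t ω) + ϑ t ω := by
    intro t
    have hz : (fun jk : Fin r × Fin p => z (t - 1 - (jk.1 : ℤ)) ω jk.2)
        = Zs t ω - es t ω := by
      funext jk
      have h2 := congrFun (hZ (t - 1 - (jk.1 : ℤ)) ω) jk.2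
      simp [hZs, hes, h2]
    have := hω t
    rw [hZ t ω, this, hz, hϑ t ω, Matrix.mulVec_sub]
    funext j
    simp only [Pi.add_apply, Pi.sub_apply]
    ring
  -- centered deviations sum to zero
  have hsum0 : ∑ i ∈ Finset.range n, (Zs (i + 1) ω - Zsbar ω) = 0 := by
    have hcard : ∑ _i ∈ Finset.range n, Zsbar ω = (n : ℝ) • Zsbar ω := by
      simp [Finset.sum_const, Nat.cast_smul_eq_nsmul ℝ]
    rw [Finset.sum_sub_distrib, hcard, hZsbar, smul_smul,
      mul_inv_cancel₀ (by exact_mod_cast Nat.one_le_iff_ne_zero.mp hn), one_smul, sub_self]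
  have hc : ∀ u : Fin r × Fin p → ℝ,
      ∑ x, B k x * u x = ∑ x, u x * Bk x :=
    fun u => Finset.sum_congr rfl fun x _ => mul_comm _ _
  -- Step 2: key identity
  have hkey : SZsZk k ω = (SZs ω).mulVec Bk + SZsϑk k ω := by
    have hterm : ∀ i ∈ Finset.range n,
        Z (i + 1) ω k • (Zs (i + 1) ω - Zsbar ω)
          = a k • (Zs (i + 1) ω - Zsbar ω)
            + (vecMulVec (Zs (i + 1) ω - Zsbar ω) (Zs (i + 1) ω)).mulVec Bk
            + ϑ (i + 1) ω k • (Zs (i + 1) ω - Zsbar ω) := by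
      intro i _
      have hZk := congrFun (hZeq ((i : ℤ) + 1)) k
      rw [hZk]
      funext jk
      simp only [Pi.add_apply, Pi.smul_apply, smul_eq_mul, Matrix.mulVec,
        Matrix.vecMulVec_apply, dotProduct, Pi.sub_apply]
      rw [hc]
      rw [Finset.sum_congr rfl (fun x _ => by ring :
        ∀ x ∈ Finset.univ, (Zs ((i:ℤ)+1) ω jk - Zsbar ω jk) * Zs ((i:ℤ)+1) ω x * Bk x
          = Zs ((i:ℤ)+1) ω x * Bk x * (Zs ((i:ℤ)+1) ω jk - Zsbar ω jk))]
      rw [← Finset.sum_mul]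
      ring
    have hsum_mulVec :
        (∑ i ∈ Finset.range n,
            vecMulVec (Zs (i + 1) ω - Zsbar ω) (Zs (i + 1) ω)).mulVec Bk
          = ∑ i ∈ Finset.range n,
              (vecMulVec (Zs (i + 1) ω - Zsbar ω) (Zs (i + 1) ω)).mulVec Bk := by
      funext jk
      simp only [Matrix.mulVec, dotProduct, Finset.sum_apply,
        Matrix.sum_apply, Finset.sum_mul]
      exact Finset.sum_comm
    rw [hSZsZk, hSZsϑk, hSZs, Finset.sum_congr rfl hterm, Finset.sum_add_distrib,
      Finset.sum_add_distrib, ← Finset.smul_sum, hsum0, smul_zero, zero_add,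
      Matrix.smul_mulVec, hsum_mulVec, smul_add]
  -- Step 3: conclude
  have hS : SZs ω = M + K := (sub_add_cancel _ _).symm
  have hsplit : SZsZk k ω = M.mulVec Bk + (SZsϑk k ω + K.mulVec Bk) := by
    rw [hkey, hS, Matrix.add_mulVec]
    abel
  rw [hsplit, Matrix.mulVec_add, Matrix.mulVec_mulVec, Matrix.nonsing_inv_mul M hdet,
    Matrix.one_mulVec]
  abel
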